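/- Let (g,⟨·,·⟩,D,θ) be a full extrinsic symmetric triple such that g contains no nonzero ideal that is a simple Lie algebra and such that the restriction of ⟨·,·⟩ to g₊⁻ = ker(θ − id) ∩ ker(D² + id) is positive definite. Then g is an abelian Lie algebra, ⟨·,·⟩ is positive definite on all of g, and D² = −id. -/

import Mathlib

/-!
Write `σ = exp (π D) = 1 + 2 D²`, an involutive automorphism of `g` with fixed algebra
`g⁺ = ker D` and `-1`-eigenspace `g⁻ = ker (D² + 1)`. Splitting along `θ` and using `D` to move
`g₋⁻` onto `g₊⁻` shows that `⟨·,·⟩` is positive definite on `g⁻`; fullness gives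
`g⁺ = [g⁻, g⁻]`, so by invariance `g⁺` acts faithfully on `g⁻`. These two facts rule out nonzero
isotropic ideals: such an ideal `A` is abelian and meets neither eigenspace of `σ`, which forces
`⁅A, σ A⁆ = 0`, and then `a + σ a` commutes with `g⁻` for `a ∈ A`. Consequently every ideal is
nondegenerate, hence has an ideal complement, so every minimal ideal is simple or central. Without
simple ideals, the orthogonal complement of the centre contains no minimal ideal, so `g` is abelian.
Then `g⁺ = [g⁻, g⁻] = 0`, i.e. `D² = -1`, and `⟨·,·⟩` is positive definite on `g = g⁻`.
-/

/-- The span of all brackets of elements of two submodules of a Lie algebra. -/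
def bracketSpan {g : Type*} [LieRing g] [LieAlgebra ℝ g] (s t : Submodule ℝ g) :
    Submodule ℝ g :=
  Submodule.span ℝ {z | ∃ x ∈ s, ∃ y ∈ t, z = ⁅x, y⁆}

lemma bracketSpan_mono {L : Type*} [LieRing L] [LieAlgebra ℝ L] {s s' t t' : Submodule ℝ L}
    (hs : s ≤ s') (ht : t ≤ t') : bracketSpan s t ≤ bracketSpan s' t' :=
  Submodule.span_mono fun _ ⟨x, hx, y, hy, h⟩ => ⟨x, hs hx, y, ht hy, h⟩

lemma bracketSpan_eq_bot {L : Type*} [LieRing L] [LieAlgebra ℝ L] [IsLieAbelian L]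
    (s t : Submodule ℝ L) : bracketSpan s t = ⊥ :=
  eq_bot_iff.mpr <| Submodule.span_le.mpr fun _ ⟨x, _, y, _, h⟩ => by
    rw [h, SetLike.mem_coe, Submodule.mem_bot]
    exact trivial_lie_zero L L x y

open LinearMap (ker)

namespace LinearMap

section

variable {R V : Type*} [Ring R] [AddCommGroup V] [Module R V]

lemma mem_ker_sub_id {f : V →ₗ[R] V} {x : V} : x ∈ ker (f - id) ↔ f x = x := by
  simp [sub_eq_zero]

lemma mem_ker_add_id {f : V →ₗ[R] V} {x : V} : x ∈ ker (f + id) ↔ f x = -x := by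
  simp [add_eq_zero_iff_eq_neg]

lemma mem_ker_comp_self_add_id {D : V →ₗ[R] V} {x : V} :
    x ∈ ker (D ∘ₗ D + id) ↔ D (D x) = -x :=
  mem_ker_add_id

end

lemma ker_le_of_involutive {K V : Type*} [Field K] [CharZero K] [AddCommGroup V] [Module K V]
    {θ D : V →ₗ[K] V}
    (hθ : ∀ x, θ (θ x) = x) (hDθ : ∀ x, D (θ x) = -θ (D x)) {S : Submodule K V}
    (hfix : ker (θ - id) ⊓ ker D ≤ S) (hanti : ker (θ + id) ⊓ ker D ≤ S) : ker D ≤ S := by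
  intro x hx
  rw [mem_ker] at hx
  have hθx : D (θ x) = 0 := by rw [hDθ, hx, map_zero, neg_zero]
  have hplus : x + θ x ∈ S :=
    hfix ⟨mem_ker_sub_id.mpr (by rw [map_add, hθ, add_comm]), by simp [hx, hθx]⟩
  have hminus : x - θ x ∈ S :=
    hanti ⟨mem_ker_add_id.mpr (by rw [map_sub, hθ, neg_sub]), by simp [hx, hθx]⟩
  have hx2 : x = (2⁻¹ : K) • ((x + θ x) + (x - θ x)) := by module
  rw [hx2]
  exact S.smul_mem _ (S.add_mem hplus hminus)

end LinearMap

section GradingInvolution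

variable {K L : Type*} [Field K] [LieRing L] [LieAlgebra K L] {D : L →ₗ[K] L}

/-- `exp (π D)` when `D³ = -D`: the identity on `ker D` and `-1` on `ker (D² + 1)`. -/
def gradingInvolution (D : L →ₗ[K] L) : L →ₗ[K] L :=
  LinearMap.id + (2 : K) • D ∘ₗ D

lemma gradingInvolution_apply (x : L) : gradingInvolution D x = x + (2 : K) • D (D x) :=
  rfl

lemma gradingInvolution_involutive (hD3 : ∀ x, D (D (D x)) = -D x) (x : L) :
    gradingInvolution D (gradingInvolution D x) = x := by
  simp only [gradingInvolution_apply, map_add, map_smul, hD3, map_neg]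
  module

variable [CharZero K]

lemma gradingInvolution_eq_self_iff (hD3 : ∀ x, D (D (D x)) = -D x) {x : L} :
    gradingInvolution D x = x ↔ D x = 0 := by
  rw [gradingInvolution_apply, add_eq_left, smul_eq_zero, or_iff_right two_ne_zero]
  refine ⟨fun h => ?_, fun h => by rw [h, map_zero]⟩
  rw [← neg_neg (D x), ← hD3, h, map_zero, neg_zero]

lemma gradingInvolution_eq_neg_iff {x : L} : gradingInvolution D x = -x ↔ D (D x) = -x := by
  rw [gradingInvolution_apply, ← sub_eq_zero, ← sub_eq_zero (a := D (D x)),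
    show x + (2 : K) • D (D x) - -x = (2 : K) • (D (D x) - -x) by module, smul_eq_zero,
    or_iff_right two_ne_zero]

lemma apply_lie_eq_zero_of_apply_apply_eq_neg (hD : ∀ x y, D ⁅x, y⁆ = ⁅D x, y⁆ + ⁅x, D y⁆)
    (hD3 : ∀ x, D (D (D x)) = -D x) {x y : L} (hx : D (D x) = -x) (hy : D (D y) = -y) :
    D ⁅x, y⁆ = 0 := by
  have h3 : D (D (D ⁅x, y⁆)) = (-4 : K) • D ⁅x, y⁆ := by
    simp only [hD, map_add, map_neg, hx, hy, neg_lie, lie_neg]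
    module
  have : (3 : K) • D ⁅x, y⁆ = 0 := by
    have := hD3 ⁅x, y⁆
    rw [h3] at this
    rw [show (3 : K) • D ⁅x, y⁆ = -D ⁅x, y⁆ - (-4 : K) • D ⁅x, y⁆ by module, this, sub_self]
  exact (smul_eq_zero.mp this).resolve_left three_ne_zero

lemma lie_apply_apply_eq_lie_of_apply_apply_eq_neg (hD : ∀ x y, D ⁅x, y⁆ = ⁅D x, y⁆ + ⁅x, D y⁆)
    (hD3 : ∀ x, D (D (D x)) = -D x) {x y : L} (hx : D (D x) = -x) (hy : D (D y) = -y) :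
    ⁅D x, D y⁆ = ⁅x, y⁆ := by
  have h := congrArg D (apply_lie_eq_zero_of_apply_apply_eq_neg hD hD3 hx hy)
  rw [map_zero, hD, map_add, hD, hD, hx, hy, neg_lie, lie_neg] at h
  have h2 : (2 : K) • (⁅D x, D y⁆ - ⁅x, y⁆) = 0 := by rw [← h]; module
  exact sub_eq_zero.mp ((smul_eq_zero.mp h2).resolve_left two_ne_zero)

lemma lie_apply_apply_eq (hD : ∀ x y, D ⁅x, y⁆ = ⁅D x, y⁆ + ⁅x, D y⁆)
    (hD3 : ∀ x, D (D (D x)) = -D x) (x y : L) : ⁅D x, D y⁆ = ⁅D (D x), D (D y)⁆ := by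
  have h := lie_apply_apply_eq_lie_of_apply_apply_eq_neg hD hD3 (hD3 (D x)) (hD3 (D y))
  rwa [hD3, hD3, neg_lie, lie_neg, neg_neg] at h

lemma gradingInvolution_lie (hD : ∀ x y, D ⁅x, y⁆ = ⁅D x, y⁆ + ⁅x, D y⁆)
    (hD3 : ∀ x, D (D (D x)) = -D x) (x y : L) :
    gradingInvolution D ⁅x, y⁆ = ⁅gradingInvolution D x, gradingInvolution D y⁆ := by
  simp only [gradingInvolution_apply, hD, map_add, add_lie, lie_add, smul_lie, lie_smul]
  rw [← lie_apply_apply_eq hD hD3]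
  module

end GradingInvolution

namespace LieIdeal

variable {R L : Type*} [CommRing R] [LieRing L] [LieAlgebra R L] {I J : LieIdeal R L}

lemma lie_eq_zero_of_isCompl (hIJ : IsCompl I J) {x y : L} (hx : x ∈ I) (hy : y ∈ J) :
    ⁅x, y⁆ = 0 := by
  rw [← LieSubmodule.mem_bot (R := R) (L := L), ← hIJ.inf_eq_bot]
  exact ⟨lie_mem_left R L I x y hx, lie_mem_right R L J x y hy⟩

lemma le_center_of_isCompl [IsLieAbelian I] (hIJ : IsCompl I J) : I ≤ LieAlgebra.center R L := by
  intro x hx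
  rw [LieAlgebra.center, LieModule.mem_maxTrivSubmodule]
  intro y
  obtain ⟨a, ha, b, hb, rfl⟩ :=
    (LieSubmodule.mem_sup _ _ _).mp (hIJ.sup_eq_top ▸ LieSubmodule.mem_top y)
  have hax : ⁅a, x⁆ = 0 := congrArg Subtype.val (trivial_lie_zero I I ⟨a, ha⟩ ⟨x, hx⟩)
  rw [add_lie, hax, zero_add, ← lie_skew, lie_eq_zero_of_isCompl hIJ hx hb, neg_zero]

lemma isSimple_of_isAtom_of_isCompl (hI : IsAtom I) (hIJ : IsCompl I J)
    (hnab : ¬IsLieAbelian I) : LieAlgebra.IsSimple R I where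
  non_abelian := hnab
  eq_bot_or_eq_top I' := by
    -- `I'` is an ideal of `L` because `J` commutes with `I`
    let I'' : LieIdeal R L :=
      { I'.toSubmodule.map I.incl.toLinearMap with
        lie_mem := by
          rintro x _ ⟨y, hy, rfl⟩
          obtain ⟨a, ha, b, hb, rfl⟩ :=
            (LieSubmodule.mem_sup _ _ _).mp (hIJ.sup_eq_top ▸ LieSubmodule.mem_top x)
          refine ⟨⁅⟨a, ha⟩, y⁆, lie_mem_right R I I' _ y hy, ?_⟩
          show ((⁅(⟨a, ha⟩ : I), y⁆ : I) : L) = ⁅a + b, (y : L)⁆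
          rw [add_lie, ← lie_skew b, lie_eq_zero_of_isCompl hIJ y.2 hb, neg_zero, add_zero]
          rfl }
    have hle : I'' ≤ I := by
      rintro _ ⟨y, -, rfl⟩
      exact y.2
    rcases hI.le_iff.mp hle with h | h
    · refine Or.inl (eq_bot_iff.mpr fun y hy => ?_)
      have : (y : L) ∈ I'' := ⟨y, hy, rfl⟩
      rw [h, LieSubmodule.mem_bot] at this
      exact (LieSubmodule.mem_bot _).mpr (Subtype.ext this)
    · refine Or.inr (eq_top_iff.mpr fun y _ => ?_)
      have hy : (y : L) ∈ I'' := by rw [h]; exact y.2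
      obtain ⟨z, hz, hzy⟩ := hy
      rwa [← Subtype.ext hzy]

end LieIdeal

section MetricLieAlgebra

open LieAlgebra.InvariantForm

variable {K L : Type*} [Field K] [LieRing L] [LieAlgebra K L] {B : LinearMap.BilinForm K L}

lemma LieIdeal.lie_eq_zero_of_isotropic (hnd : B.SeparatingLeft) (hB : B.lieInvariant L)
    {I : LieIdeal K L} (hI : ∀ x ∈ I, ∀ y ∈ I, B x y = 0) {x y : L} (hx : x ∈ I) (hy : y ∈ I) :
    ⁅x, y⁆ = 0 :=
  hnd _ fun z => by rw [hB, hI y hy _ (lie_mem_left K L I x z hx), neg_zero]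

variable [Module.Finite K L]

lemma LieIdeal.isCompl_orthogonal (hrefl : B.IsRefl) (hB : B.lieInvariant L)
    (hiso : ∀ I : LieIdeal K L, (∀ x ∈ I, ∀ y ∈ I, B x y = 0) → I = ⊥) (I : LieIdeal K L) :
    IsCompl I (orthogonal B hB I) := by
  rw [← LieSubmodule.isCompl_toSubmodule, orthogonal_toSubmodule,
    LinearMap.BilinForm.isCompl_orthogonal_iff_disjoint hrefl, ← orthogonal_toSubmodule _ hB,
    LieSubmodule.disjoint_toSubmodule, disjoint_iff]
  refine hiso _ fun x hx y hy => ?_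
  rw [LieSubmodule.mem_inf] at hx hy
  exact (mem_orthogonal B hB I y).mp hy.2 x hx.1

theorem LieAlgebra.isLieAbelian_of_forall_isotropic_eq_bot (hrefl : B.IsRefl)
    (hB : B.lieInvariant L)
    (hiso : ∀ I : LieIdeal K L, (∀ x ∈ I, ∀ y ∈ I, B x y = 0) → I = ⊥)
    (hsimple : ¬∃ I : LieIdeal K L, I ≠ ⊥ ∧ LieAlgebra.IsSimple K I) : IsLieAbelian L := by
  have hz := LieIdeal.isCompl_orthogonal hrefl hB hiso (center K L)
  suffices orthogonal B hB (center K L) = ⊥ by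
    rw [isLieAbelian_iff_center_eq_top K, ← hz.sup_eq_top, this, sup_bot_eq]
  by_contra hne
  obtain ⟨I, hI, hIle⟩ := (eq_bot_or_exists_atom_le _).resolve_left hne
  have hIc := LieIdeal.isCompl_orthogonal hrefl hB hiso I
  have : IsLieAbelian I := by
    by_contra h
    exact hsimple ⟨I, hI.1, LieIdeal.isSimple_of_isAtom_of_isCompl hI hIc h⟩
  exact hI.1 (le_bot_iff.mp (hz.disjoint (LieIdeal.le_center_of_isCompl hIc) hIle))

end MetricLieAlgebra

section Riemannian

variable {L : Type*} [LieRing L] [LieAlgebra ℝ L] {B : LinearMap.BilinForm ℝ L}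

theorem LieIdeal.eq_bot_of_isotropic (hnd : B.SeparatingLeft) (hB : B.lieInvariant L)
    {σ : L →ₗ[ℝ] L} (hσ : ∀ x y, σ ⁅x, y⁆ = ⁅σ x, σ y⁆) (hσσ : ∀ x, σ (σ x) = x)
    (hpos : ∀ x, σ x = -x → x ≠ 0 → 0 < B x x)
    (hfaith : ∀ c, σ c = c → (∀ u, σ u = -u → ⁅c, u⁆ = 0) → c = 0)
    (A : LieIdeal ℝ L) (hA : ∀ x ∈ A, ∀ y ∈ A, B x y = 0) : A = ⊥ := by
  have hab : ∀ x ∈ A, ∀ y ∈ A, ⁅x, y⁆ = 0 := fun x hx y hy =>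
    LieIdeal.lie_eq_zero_of_isotropic hnd hB hA hx hy
  have hanti : ∀ x ∈ A, σ x = -x → x = 0 := fun x hx hσx => by
    by_contra h
    exact (hpos x hσx h).ne' (hA x hx x hx)
  have hfix : ∀ x ∈ A, σ x = x → x = 0 := fun x hx hσx =>
    hfaith x hσx fun u hu =>
      hanti _ (lie_mem_left ℝ L A x u hx) (by rw [hσ, hσx, hu, lie_neg])
  have hσA : ∀ x ∈ A, σ x ∈ A → x = 0 := fun x hx hσx => by
    have h₁ := hfix (x + σ x) (add_mem hx hσx) (by rw [map_add, hσσ, add_comm])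
    have h₂ := hanti (x - σ x) (sub_mem hx hσx) (by rw [map_sub, hσσ, neg_sub])
    calc x = (2⁻¹ : ℝ) • ((x + σ x) + (x - σ x)) := by module
      _ = 0 := by rw [h₁, h₂, add_zero, smul_zero]
  have hcross : ∀ x ∈ A, ∀ y ∈ A, ⁅x, σ y⁆ = 0 := fun x hx y hy =>
    hσA _ (lie_mem_left ℝ L A x _ hx) (by rw [hσ, hσσ]; exact lie_mem_right ℝ L A _ y hy)
  -- so `A + σ A` is abelian; for `σ u = -u`, `⁅a + σ a, u⁆` lies in it and is `σ`-odd, hence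
  -- is `B`-isotropic and vanishes
  refine eq_bot_iff.mpr fun a ha => (LieSubmodule.mem_bot a).mpr ?_
  set p := a + σ a
  have hp : ∀ u, σ u = -u → ⁅p, u⁆ = 0 := fun u hu => by
    set b := ⁅a, u⁆
    have hb : b ∈ A := lie_mem_left ℝ L A a u ha
    have hw : ⁅p, u⁆ = b - σ b := by
      rw [add_lie, hσ, hu, lie_neg, sub_neg_eq_add]
    have hpw : ⁅p, ⁅p, u⁆⁆ = 0 := by
      rw [hw, add_lie, lie_sub, lie_sub, hab a ha b hb, hcross a ha b hb, ← hσ, hab a ha b hb,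
        ← lie_skew, hcross b hb a ha, map_zero, neg_zero, sub_self, add_zero]
    by_contra h
    refine (hpos _ ?_ h).ne' ?_
    · rw [hw, map_sub, hσσ, neg_sub]
    · rw [hB, hpw, map_zero, neg_zero]
  have hp0 : p = 0 := hfaith p (by rw [map_add, hσσ, add_comm]) hp
  exact hanti a ha (eq_neg_of_add_eq_zero_right hp0)

end Riemannian

section ExtrinsicSymmetric

variable {L : Type*} [LieRing L] [LieAlgebra ℝ L] {B : LinearMap.BilinForm ℝ L} {D : L →ₗ[ℝ] L}

lemma eq_zero_of_forall_lie_eq_zero (hnd : B.SeparatingLeft) (hB : B.lieInvariant L)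
    (hDskew : ∀ x y, B (D x) y = -B x (D y)) (hD3 : ∀ x, D (D (D x)) = -D x)
    (hspan : ker D ≤ bracketSpan (ker (D ∘ₗ D + LinearMap.id)) (ker (D ∘ₗ D + LinearMap.id)))
    {c : L} (hc : D c = 0) (hcV : ∀ u, D (D u) = -u → ⁅c, u⁆ = 0) : c = 0 := by
  have hspan_le : bracketSpan (ker (D ∘ₗ D + LinearMap.id)) (ker (D ∘ₗ D + LinearMap.id)) ≤
      ker (B c) := by
    refine Submodule.span_le.mpr ?_
    rintro _ ⟨u, hu, w, -, rfl⟩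
    rw [SetLike.mem_coe, LinearMap.mem_ker, ← neg_eq_zero, ← hB, ← lie_skew,
      hcV u (LinearMap.mem_ker_comp_self_add_id.mp hu), neg_zero, map_zero,
      LinearMap.zero_apply]
  refine hnd c fun y => ?_
  have hplus : B c (y + D (D y)) = 0 :=
    hspan_le (hspan (by rw [LinearMap.mem_ker, map_add, hD3, add_neg_cancel]))
  have hminus : B c (D (D y)) = 0 := by
    rw [← neg_eq_zero, ← hDskew, hc, map_zero, LinearMap.zero_apply]
  rwa [map_add, hminus, add_zero] at hplus

/-- `D` maps `ker (θ + 1) ∩ ker (D² + 1)` isometrically into `ker (θ - 1) ∩ ker (D² + 1)`, and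
the two eigenspaces of `θ` are `B`-orthogonal. -/
lemma pos_of_apply_apply_eq_neg (hsymm : ∀ x y, B x y = B y x)
    (hDskew : ∀ x y, B (D x) y = -B x (D y)) (hD3 : ∀ x, D (D (D x)) = -D x)
    {θ : L →ₗ[ℝ] L} (hθ : ∀ x, θ (θ x) = x) (hθB : ∀ x y, B (θ x) (θ y) = B x y)
    (hDθ : ∀ x, D (θ x) = -θ (D x))
    (hriem : ∀ x, θ x = x → D (D x) = -x → x ≠ 0 → 0 < B x x)
    {x : L} (hx : D (D x) = -x) (hx0 : x ≠ 0) : 0 < B x x := by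
  have hnonneg : ∀ y, θ y = y → D (D y) = -y → 0 ≤ B y y := fun y hθy hy => by
    rcases eq_or_ne y 0 with rfl | hy0
    · simp
    · exact (hriem y hθy hy hy0).le
  set a := x + θ x
  set b := x - θ x
  have hθa : θ a = a := by rw [map_add, hθ, add_comm]
  have hθb : θ b = -b := by rw [map_sub, hθ, neg_sub]
  have hDDa : D (D a) = -a := by simp only [a, map_add, map_neg, hDθ, hx, neg_neg, neg_add]
  have hDDb : D (D b) = -b := by simp only [b, map_sub, map_neg, hDθ, hx, neg_neg, neg_sub']
  have hθDb : θ (D b) = D b := by rw [← neg_neg (θ (D b)), ← hDθ, hθb, map_neg, neg_neg]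
  have hab : B a b = 0 := by
    have := hθB a b
    rw [hθa, hθb, map_neg] at this
    linarith
  have hbb : B b b = B (D b) (D b) := by rw [hDskew, hDDb, map_neg, neg_neg]
  have hx2 : x = (2⁻¹ : ℝ) • (a + b) := by module
  have h4 : 4 * B x x = B a a + B (D b) (D b) := by
    rw [hx2, ← hbb]
    simp only [map_smul, map_add, LinearMap.smul_apply, LinearMap.add_apply, smul_eq_mul, hab,
      hsymm b a]
    ring
  have hpa := hnonneg a hθa hDDa
  have hpb := hnonneg (D b) hθDb (hD3 b)
  rcases eq_or_ne a 0 with ha0 | ha0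
  · have hDb0 : D b ≠ 0 := fun h => hx0 <| by
      have hb0 : b = 0 := by rw [← neg_neg b, ← hDDb, h, map_zero, neg_zero]
      rw [hx2, ha0, hb0, add_zero, smul_zero]
    have := hriem (D b) hθDb (hD3 b) hDb0
    linarith
  · have := hriem a hθa hDDa ha0
    linarith

end ExtrinsicSymmetric

theorem stmt4 {g : Type*} [LieRing g] [LieAlgebra ℝ g] [Module.Finite ℝ g]
    (B : LinearMap.BilinForm ℝ g)
    (hsymm : ∀ x y, B x y = B y x)
    (hnd : B.Nondegenerate)
    (hinv : ∀ x y z : g, B ⁅x, y⁆ z + B y ⁅x, z⁆ = 0)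
    (D : g →ₗ[ℝ] g)
    (hDder : ∀ x y : g, D ⁅x, y⁆ = ⁅D x, y⁆ + ⁅x, D y⁆)
    (hDskew : ∀ x y, B (D x) y = -(B x (D y)))
    (hD3 : D ∘ₗ D ∘ₗ D = -D)
    (θ : g →ₗ[ℝ] g)
    (hθ2 : θ ∘ₗ θ = LinearMap.id)
    (hθiso : ∀ x y, B (θ x) (θ y) = B x y)
    (hDθ : D ∘ₗ θ = -(θ ∘ₗ D))
    (hext : bracketSpan
        (LinearMap.ker (θ - LinearMap.id) ⊓ LinearMap.ker (D ∘ₗ D + LinearMap.id))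
        (LinearMap.ker (θ - LinearMap.id) ⊓ LinearMap.ker (D ∘ₗ D + LinearMap.id)) =
        LinearMap.ker (θ - LinearMap.id) ⊓ LinearMap.ker D)
    (hfull : bracketSpan
        (LinearMap.ker (θ - LinearMap.id) ⊓ LinearMap.ker (D ∘ₗ D + LinearMap.id))
        (LinearMap.ker (θ + LinearMap.id) ⊓ LinearMap.ker (D ∘ₗ D + LinearMap.id)) =
        LinearMap.ker (θ + LinearMap.id) ⊓ LinearMap.ker D)
    (hnosimple : ¬ ∃ I : LieIdeal ℝ g, I ≠ ⊥ ∧ LieAlgebra.IsSimple ℝ I)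
    (hriem : ∀ x ∈ LinearMap.ker (θ - LinearMap.id) ⊓ LinearMap.ker (D ∘ₗ D + LinearMap.id),
      x ≠ 0 → 0 < B x x) :
    (∀ x y : g, ⁅x, y⁆ = 0) ∧
      (∀ x : g, x ≠ 0 → 0 < B x x) ∧
      D ∘ₗ D = -LinearMap.id := by
  have hD3' (x : g) : D (D (D x)) = -D x := by simpa using LinearMap.congr_fun hD3 x
  have hθ2' (x : g) : θ (θ x) = x := by simpa using LinearMap.congr_fun hθ2 x
  have hDθ' (x : g) : D (θ x) = -θ (D x) := by simpa using LinearMap.congr_fun hDθ x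
  have hB : B.lieInvariant g := fun x y z => eq_neg_of_add_eq_zero_left (hinv x y z)
  have hspan : ker D ≤ bracketSpan (ker (D ∘ₗ D + LinearMap.id)) (ker (D ∘ₗ D + LinearMap.id)) :=
    LinearMap.ker_le_of_involutive hθ2' hDθ'
      (hext ▸ bracketSpan_mono inf_le_right inf_le_right)
      (hfull ▸ bracketSpan_mono inf_le_right inf_le_right)
  have hpos (x : g) : D (D x) = -x → x ≠ 0 → 0 < B x x :=
    pos_of_apply_apply_eq_neg hsymm hDskew hD3' hθ2' hθiso hDθ' fun y hθy hy =>
      hriem y ⟨LinearMap.mem_ker_sub_id.mpr hθy, LinearMap.mem_ker_comp_self_add_id.mpr hy⟩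
  have hiso : ∀ I : LieIdeal ℝ g, (∀ x ∈ I, ∀ y ∈ I, B x y = 0) → I = ⊥ :=
    LieIdeal.eq_bot_of_isotropic hnd.1 hB (gradingInvolution_lie hDder hD3')
      (gradingInvolution_involutive hD3') (fun x hx => hpos x (gradingInvolution_eq_neg_iff.mp hx))
      fun c hc hcV => eq_zero_of_forall_lie_eq_zero hnd.1 hB hDskew hD3' hspan
        ((gradingInvolution_eq_self_iff hD3').mp hc)
        fun u hu => hcV u (gradingInvolution_eq_neg_iff.mpr hu)
  have : IsLieAbelian g := LieAlgebra.isLieAbelian_of_forall_isotropic_eq_bot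
    (fun x y h => hsymm x y ▸ h) hB hiso hnosimple
  have hDD (x : g) : D (D x) = -x := by
    have hker : D (D x) + x ∈ ker D := by rw [LinearMap.mem_ker, map_add, hD3', neg_add_cancel]
    rw [bracketSpan_eq_bot] at hspan
    exact eq_neg_of_add_eq_zero_left ((Submodule.mem_bot ℝ).mp (hspan hker))
  exact ⟨trivial_lie_zero g g, fun x => hpos x (hDD x), LinearMap.ext fun x => by simpa using hDD x⟩
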